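/- Let K be a nonarchimedean field, A a Banach algebra over K, and p ⊊ A a closed prime ideal such that the quotient Banach algebra B = A/p (with quotient norm) satisfies: for every non-zero x ∈ B there exists c > 0 with ‖f‖ ≤ c·‖fx‖ for all f ∈ B (i.e. Core(B) = B). Then there exists a bounded multiplicative seminorm φ on A with ker(φ) = p. -/

import Mathlib

/-!
Pass to the quotient `B = A ⧸ p` with its quotient norm `μ`: it is nonarchimedean with
`μ 1 = 1`, and the core hypothesis says that every `x ≠ 0` has a constant `c > 0` with
`c * μ g ≤ μ (x * g)` for all `g`. Call a nonarchimedean ring seminorm `ψ` with `ψ 1 = 1`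
admissible if it inherits all these lower bounds of `μ`. Infima of chains of admissible
seminorms are admissible, so Zorn's lemma gives a minimal admissible `φ ≤ μ`. Its smoothing
`lim φ (x ^ n) ^ (1 / n)` is admissible and below `φ`, so `φ` is power-multiplicative; then for
`φ x ≠ 0` the homogenization `lim φ (y * x ^ n) / φ x ^ n` is admissible and below `φ`, so `φ`
is multiplicative. The inherited bounds give `φ x ≥ c * φ 1 > 0` for `x ≠ 0`, hence `φ ∘ mk` is a
bounded multiplicative seminorm on `A` with kernel exactly `p`.
-/

open Filter Topology

/-- A bounded multiplicative (nonarchimedean) seminorm on a seminormed commutative ring. -/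
structure IsBddMulSeminorm {A : Type*} [SeminormedCommRing A] (φ : A → ℝ) : Prop where
  nonneg : ∀ f, 0 ≤ φ f
  map_zero : φ 0 = 0
  map_one : φ 1 = 1
  map_neg : ∀ f, φ (-f) = φ f
  nonarch : ∀ f g, φ (f + g) ≤ max (φ f) (φ g)
  mul_eq : ∀ f g, φ (f * g) = φ f * φ g
  bounded : ∃ C > 0, ∀ f, φ f ≤ C * ‖f‖

/-- The quotient seminorm on `A ⧸ I`: `‖y‖ = inf { ‖g‖ : g ∈ A, g + I = y }`. -/
noncomputable def quotSeminorm {A : Type*} [SeminormedCommRing A] (I : Ideal A)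
    (y : A ⧸ I) : ℝ :=
  sInf {r : ℝ | ∃ g : A, Ideal.Quotient.mk I g = y ∧ r = ‖g‖}

namespace RingSeminorm

variable {B : Type*} [CommRing B]

instance : PartialOrder (RingSeminorm B) := PartialOrder.lift _ DFunLike.coe_injective

def mulLowerBounds (ψ : B → ℝ) (f : B) : Set ℝ :=
  {c | 0 ≤ c ∧ ∀ g, c * ψ g ≤ ψ (f * g)}

theorem pow_mem_mulLowerBounds {ψ : B → ℝ} {f : B} {c : ℝ} (hc : c ∈ mulLowerBounds ψ f)
    (n : ℕ) : c ^ n ∈ mulLowerBounds ψ (f ^ n) := by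
  induction n with
  | zero => exact ⟨zero_le_one.trans_eq (pow_zero c).symm, fun g => by simp⟩
  | succ n ih =>
    refine ⟨pow_nonneg hc.1 _, fun g => ?_⟩
    calc c ^ (n + 1) * ψ g = c * (c ^ n * ψ g) := by ring
      _ ≤ c * ψ (f ^ n * g) := mul_le_mul_of_nonneg_left (ih.2 g) hc.1
      _ ≤ ψ (f ^ (n + 1) * g) := by rw [pow_succ', mul_assoc]; exact hc.2 _

structure IsAdmissible (μ ψ : RingSeminorm B) : Prop where
  map_one : ψ 1 = 1
  isNonarchimedean : IsNonarchimedean ψ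
  mulLowerBounds_subset : ∀ f, mulLowerBounds μ f ⊆ mulLowerBounds ψ f

variable {μ ψ φ : RingSeminorm B}

theorem IsAdmissible.apply_pos (h : IsAdmissible μ ψ) {x : B} {c : ℝ} (hc : 0 < c)
    (hx : ∀ f, μ f ≤ c * μ (f * x)) : 0 < ψ x := by
  have hinv : c⁻¹ ∈ mulLowerBounds μ x :=
    ⟨inv_nonneg.2 hc.le, fun g => by
      rw [inv_mul_le_iff₀ hc, mul_comm x]; exact hx g⟩
  have := (h.mulLowerBounds_subset x hinv).2 1
  rw [h.map_one, mul_one, mul_one] at this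
  exact (inv_pos.2 hc).trans_le this

theorem mem_mulLowerBounds_smoothingFun (hψ1 : ψ 1 ≤ 1) {f : B} {c : ℝ}
    (hc : ∀ n, c ^ n ∈ mulLowerBounds ψ (f ^ n)) : c ∈ mulLowerBounds (smoothingFun ψ) f := by
  have hc0 : 0 ≤ c := by simpa using (hc 1).1
  refine ⟨hc0, fun g => le_of_tendsto_of_tendsto
    ((tendsto_smoothingFun_of_map_one_le_one ψ hψ1 g).const_mul c)
    (tendsto_smoothingFun_of_map_one_le_one ψ hψ1 (f * g)) ?_⟩
  filter_upwards [eventually_ne_atTop 0] with n hn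
  calc c * ψ (g ^ n) ^ (1 / n : ℝ) = (c ^ n * ψ (g ^ n)) ^ (1 / n : ℝ) := by
        rw [Real.mul_rpow (by positivity) (apply_nonneg _ _), one_div,
          Real.pow_rpow_inv_natCast hc0 hn]
    _ ≤ ψ ((f * g) ^ n) ^ (1 / n : ℝ) := by
        gcongr
        rw [mul_pow]
        exact (hc n).2 _

theorem IsAdmissible.smoothingSeminorm (h : IsAdmissible μ ψ) :
    IsAdmissible μ (smoothingSeminorm ψ h.map_one.le h.isNonarchimedean) where
  map_one := (smoothingFun_of_powMul ψ h.map_one.le (x := 1) fun _ _ => by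
    simp [h.map_one]).trans h.map_one
  isNonarchimedean := isNonarchimedean_smoothingFun ψ h.map_one.le h.isNonarchimedean
  mulLowerBounds_subset f _ hc := mem_mulLowerBounds_smoothingFun h.map_one.le fun n =>
    h.mulLowerBounds_subset _ (pow_mem_mulLowerBounds hc n)

theorem mem_mulLowerBounds_seminormFromConst (hψ1 : ψ 1 ≤ 1) {x : B} (hx : ψ x ≠ 0)
    (hpm : IsPowMul ψ) {f : B} {c : ℝ} (hc : c ∈ mulLowerBounds ψ f) :
    c ∈ mulLowerBounds (seminormFromConst' x ψ) f :=
  ⟨hc.1, fun g => le_of_tendsto_of_tendsto'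
    ((tendsto_seminormFromConst_seq_atTop hψ1 hx hpm g).const_mul c)
    (tendsto_seminormFromConst_seq_atTop hψ1 hx hpm (f * g)) fun n => by
      rw [seminormFromConst_seq, seminormFromConst_seq, ← mul_div_assoc, mul_assoc]
      gcongr
      exact hc.2 _⟩

theorem IsAdmissible.seminormFromConst (h : IsAdmissible μ ψ) (hpm : IsPowMul ψ) {x : B}
    (hx : ψ x ≠ 0) : IsAdmissible μ (seminormFromConst h.map_one.le hx hpm) where
  map_one := seminormFromConst_one h.map_one.le hx hpm
  isNonarchimedean := seminormFromConst_isNonarchimedean h.map_one.le hx hpm h.isNonarchimedean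
  mulLowerBounds_subset f := (h.mulLowerBounds_subset f).trans fun _ =>
    mem_mulLowerBounds_seminormFromConst h.map_one.le hx hpm

section DirectedInf

variable (s : Set (RingSeminorm B))

theorem tendsto_atBot_iInf_apply (f : B) :
    Tendsto (fun ψ : s => (ψ : RingSeminorm B) f) atBot (𝓝 (⨅ ψ : s, (ψ : RingSeminorm B) f)) :=
  tendsto_atBot_ciInf (fun _ _ h => h f) ⟨0, by rintro _ ⟨ψ, rfl⟩; exact apply_nonneg _ _⟩

variable [Nonempty s] [IsDirected s (· ≥ ·)]

noncomputable def directedInf : RingSeminorm B where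
  toFun f := ⨅ ψ : s, (ψ : RingSeminorm B) f
  map_zero' := by simp
  add_le' f g := le_of_tendsto_of_tendsto' (tendsto_atBot_iInf_apply s (f + g))
    ((tendsto_atBot_iInf_apply s f).add (tendsto_atBot_iInf_apply s g)) fun _ =>
      map_add_le_add _ _ _
  neg' f := by simp only [map_neg_eq_map]
  mul_le' f g := le_of_tendsto_of_tendsto' (tendsto_atBot_iInf_apply s (f * g))
    ((tendsto_atBot_iInf_apply s f).mul (tendsto_atBot_iInf_apply s g)) fun _ =>
      map_mul_le_mul _ _ _

theorem directedInf_apply (f : B) : directedInf s f = ⨅ ψ : s, (ψ : RingSeminorm B) f := rfl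

theorem directedInf_le (hψ : ψ ∈ s) : directedInf s ≤ ψ := fun f =>
  ciInf_le ⟨0, by rintro _ ⟨ψ, rfl⟩; exact apply_nonneg _ _⟩ (⟨ψ, hψ⟩ : s)

theorem IsAdmissible.directedInf (h : ∀ ψ ∈ s, IsAdmissible μ ψ) :
    IsAdmissible μ (directedInf s) where
  map_one := by simp [directedInf_apply, fun ψ : s => (h ψ ψ.2).map_one]
  isNonarchimedean f g := le_of_tendsto_of_tendsto' (tendsto_atBot_iInf_apply s (f + g))
    ((tendsto_atBot_iInf_apply s f).max (tendsto_atBot_iInf_apply s g)) fun ψ =>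
      (h ψ ψ.2).isNonarchimedean f g
  mulLowerBounds_subset f _ hc := ⟨hc.1, fun g => le_of_tendsto_of_tendsto'
    ((tendsto_atBot_iInf_apply s g).const_mul _) (tendsto_atBot_iInf_apply s (f * g)) fun ψ =>
      ((h ψ ψ.2).mulLowerBounds_subset f hc).2 g⟩

end DirectedInf

theorem exists_le_minimal_isAdmissible (hμ : IsAdmissible μ μ) :
    ∃ φ ≤ μ, Minimal (IsAdmissible μ) φ := by
  let S : Set (RingSeminorm B)ᵒᵈ := {ψ | IsAdmissible μ (OrderDual.ofDual ψ)}
  have hchains : ∀ c ⊆ S, IsChain (· ≤ ·) c → ∀ ψ ∈ c, ∃ lb ∈ S, ∀ χ ∈ c, χ ≤ lb := by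
    intro c hc hchain ψ hψ
    let s : Set (RingSeminorm B) := OrderDual.toDual ⁻¹' c
    have : Nonempty s := ⟨⟨_, hψ⟩⟩
    have : IsDirected s (· ≥ ·) := ⟨fun a b => (hchain.total a.2 b.2).elim
      (fun h => ⟨b, h, le_rfl⟩) (fun h => ⟨a, le_rfl, h⟩)⟩
    exact ⟨OrderDual.toDual (directedInf s), IsAdmissible.directedInf s fun χ hχ => hc hχ,
      fun χ hχ => directedInf_le s (ψ := OrderDual.ofDual χ) hχ⟩
  obtain ⟨φ, hle, hmin⟩ := zorn_le_nonempty₀ S hchains (OrderDual.toDual μ) hμ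
  exact ⟨OrderDual.ofDual φ, hle, hmin.of_dual⟩

theorem isPowMul_of_minimal_isAdmissible (h : Minimal (IsAdmissible μ) φ) : IsPowMul φ := by
  have heq := h.eq_of_le h.prop.smoothingSeminorm (smoothingFun_le_self φ)
  rw [← heq]
  exact isPowMul_smoothingFun φ h.prop.map_one.le

theorem map_mul_of_minimal_isAdmissible (h : Minimal (IsAdmissible μ) φ) (x y : B) :
    φ (x * y) = φ x * φ y := by
  by_cases hx : φ x = 0
  · rw [hx, zero_mul]
    exact le_antisymm ((map_mul_le_mul φ x y).trans_eq (by rw [hx, zero_mul]))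
      (apply_nonneg _ _)
  have hpm := isPowMul_of_minimal_isAdmissible h
  have heq : seminormFromConst' x φ = φ := congrArg DFunLike.coe <|
    h.eq_of_le (h.prop.seminormFromConst hpm hx)
      (seminormFromConst_le_seminorm h.prop.map_one.le hx hpm)
  simpa only [heq] using seminormFromConst_const_mul h.prop.map_one.le hx hpm y

theorem exists_mulRingNorm_le (μ : RingSeminorm B) (hμ1 : μ 1 = 1) (hna : IsNonarchimedean μ)
    (hcore : ∀ x, x ≠ 0 → ∃ c > 0, ∀ f, μ f ≤ c * μ (f * x)) :
    ∃ φ : MulRingNorm B, IsNonarchimedean φ ∧ ∀ f, φ f ≤ μ f := by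
  obtain ⟨φ, hle, hmin⟩ := exists_le_minimal_isAdmissible ⟨hμ1, hna, fun _ => subset_rfl⟩
  refine ⟨{ φ with
      map_one' := hmin.prop.map_one
      map_mul' := map_mul_of_minimal_isAdmissible hmin
      eq_zero_of_map_eq_zero' := fun x hx => ?_ }, hmin.prop.isNonarchimedean, hle⟩
  by_contra hx0
  obtain ⟨c, hc, hcx⟩ := hcore x hx0
  exact (hmin.prop.apply_pos hc hcx).ne' hx

end RingSeminorm

section Quotient

variable {R : Type*} [SeminormedCommRing R] (I : Ideal R)

theorem quotSeminorm_eq_norm (y : R ⧸ I) : quotSeminorm I y = ‖y‖ := by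
  obtain ⟨g, rfl⟩ := Ideal.Quotient.mk_surjective y
  refine IsGLB.csInf_eq ⟨?_, fun b hb => le_of_forall_pos_lt_add fun ε hε => ?_⟩
    ⟨‖g‖, g, rfl, rfl⟩
  · rintro _ ⟨g', hg', rfl⟩
    exact hg' ▸ Ideal.Quotient.norm_mk_le I g'
  · obtain ⟨g', hg', hlt⟩ := Ideal.Quotient.norm_mk_lt (Ideal.Quotient.mk I g) hε
    exact (hb ⟨g', hg', rfl⟩).trans_lt hlt

theorem Ideal.Quotient.isNonarchimedean_norm (hR : IsNonarchimedean (‖·‖ : R → ℝ)) :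
    IsNonarchimedean (‖·‖ : R ⧸ I → ℝ) := by
  intro x y
  refine le_of_forall_pos_lt_add fun ε hε => ?_
  obtain ⟨a, rfl, ha⟩ := Ideal.Quotient.norm_mk_lt x hε
  obtain ⟨b, rfl, hb⟩ := Ideal.Quotient.norm_mk_lt y hε
  calc ‖Ideal.Quotient.mk I a + Ideal.Quotient.mk I b‖ ≤ ‖a + b‖ := by
        rw [← map_add]; exact Ideal.Quotient.norm_mk_le I _
    _ ≤ max ‖a‖ ‖b‖ := hR a b
    _ < max ‖Ideal.Quotient.mk I a‖ ‖Ideal.Quotient.mk I b‖ + ε := by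
        rw [← max_add_add_right]; exact max_lt_max ha hb

theorem Ideal.Quotient.norm_one_eq_one [NormOneClass R] [IsClosed (I : Set R)] (hI : I ≠ ⊤) :
    ‖(1 : R ⧸ I)‖ = 1 := by
  have := Ideal.Quotient.nontrivial_iff.mpr hI
  refine le_antisymm ?_ (one_le_norm_one _)
  simpa using Ideal.Quotient.norm_mk_le I 1

end Quotient

theorem closed_prime_with_full_core_is_kernel_general {A : Type*}
    [NormedCommRing A] [NormOneClass A]
    (hA : IsNonarchimedean (fun a : A => ‖a‖))
    (p : Ideal A) (hp : p.IsPrime) (hpc : IsClosed (p : Set A))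
    (hcore : ∀ x : A ⧸ p, x ≠ 0 →
      ∃ c > 0, ∀ f : A ⧸ p, quotSeminorm p f ≤ c * quotSeminorm p (f * x)) :
    ∃ φ : A → ℝ, IsBddMulSeminorm φ ∧ ∀ f, f ∈ p ↔ φ f = 0 := by
  have := hpc
  obtain ⟨φ, hna, hle⟩ :=
    RingSeminorm.exists_mulRingNorm_le (SeminormedRing.toRingSeminorm (A ⧸ p))
      (Ideal.Quotient.norm_one_eq_one p hp.ne_top) (Ideal.Quotient.isNonarchimedean_norm p hA)
      fun x hx => by
        simpa only [quotSeminorm_eq_norm, SeminormedRing.toRingSeminorm_apply] using hcore x hx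
  refine ⟨fun f => φ (Ideal.Quotient.mk p f), ⟨fun _ => apply_nonneg _ _, by simp, by simp,
    fun _ => by simp, fun f g => by simpa only [map_add] using hna _ _, fun _ _ => by simp,
    ⟨1, one_pos, fun f => (hle _).trans ?_⟩⟩, fun f => ?_⟩
  · simpa using Ideal.Quotient.norm_mk_le p f
  · rw [map_eq_zero_iff_eq_zero, Ideal.Quotient.eq_zero_iff_mem]

/-- If `p` is a closed prime ideal of a Banach algebra over a nonarchimedean field such that
the quotient `A ⧸ p` with its quotient norm satisfies `Core(A/p) = A/p`, then `p` is the
kernel of some bounded multiplicative seminorm on `A`. -/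
theorem closed_prime_with_full_core_is_kernel {K A : Type*}
    [NontriviallyNormedField K] [CompleteSpace K]
    (hK : IsNonarchimedean (fun x : K => ‖x‖))
    [NormedCommRing A] [NormOneClass A] [NormedAlgebra K A] [CompleteSpace A]
    (hA : IsNonarchimedean (fun a : A => ‖a‖))
    (p : Ideal A) (hp : p.IsPrime) (hpc : IsClosed (p : Set A))
    (hcore : ∀ x : A ⧸ p, x ≠ 0 →
      ∃ c > 0, ∀ f : A ⧸ p, quotSeminorm p f ≤ c * quotSeminorm p (f * x)) :
    ∃ φ : A → ℝ, IsBddMulSeminorm φ ∧ ∀ f, f ∈ p ↔ φ f = 0 :=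
  closed_prime_with_full_core_is_kernel_general hA p hp hpc hcore
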